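/- Let V be a unital commutative associative ℂ-algebra with a trace str, let l ∈ {1, 2}, and let A be a differential operator of order at most l on V. Then for all f_1,…,f_l, f_{l+1} ∈ V one has str(⟨f_1,…,f_l⟩_l^A · f_{l+1} · (−)) = 0. -/
import Mathlib


/-- The Koszul bracket hierarchy of an operator `D` on a commutative algebra:
`⟨f⟩₁ = D f` and
`⟨f₁,…,f_{l+1}⟩_{l+1} = ⟨f₁,…,f_{l-1},f_l·f_{l+1}⟩_l − ⟨f₁,…,f_l⟩_l·f_{l+1} − f_l·⟨f₁,…,f_{l-1},f_{l+1}⟩_l`. -/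
def koszul {V : Type*} [CommRing V] (D : V → V) : (l : ℕ) → (Fin l → V) → V
  | 0, _ => 0
  | 1, f => D (f 0)
  | l + 2, f =>
      koszul D (l + 1)
        (Fin.snoc (fun i : Fin l => f i.castSucc.castSucc)
          (f ⟨l, by omega⟩ * f ⟨l + 1, by omega⟩))
      - koszul D (l + 1) (fun i => f i.castSucc) * f ⟨l + 1, by omega⟩
      - f ⟨l, by omega⟩ *
          koszul D (l + 1)
            (Fin.snoc (fun i : Fin l => f i.castSucc.castSucc) (f ⟨l + 1, by omega⟩))

/-- `D` is a differential operator of order at most `l` if the `(l+1)`-st Koszul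
bracket vanishes identically. -/
def IsDiffOpOfOrderAtMost {V : Type*} [CommRing V] (D : V → V) (l : ℕ) : Prop :=
  ∀ f : Fin (l + 1) → V, koszul D (l + 1) f = 0

/-- If `V` carries a trace `str`, `l ∈ {1,2}` and `A` is a differential
operator of order at most `l`, then `str(⟨f₁,…,f_l⟩_l^A · f_{l+1} · (−)) = 0`. -/

lemma koszul_two {V : Type*} [CommRing V] (D : V → V) (f : Fin 2 → V) :
    koszul D 2 f = D (f 0 * f 1) - D (f 0) * f 1 - f 0 * D (f 1) := by
  simp [koszul, Fin.snoc]

lemma koszul_three {V : Type*} [CommRing V] (D : V → V) (f : Fin 3 → V) :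
    koszul D 3 f = koszul D 2 ![f 0, f 1 * f 2] - koszul D 2 ![f 0, f 1] * f 2
      - f 1 * koszul D 2 ![f 0, f 2] := by
  simp [koszul, Fin.snoc]

lemma trace_commutator_aux {V : Type*} [CommRing V] [Algebra ℂ V]
    (str : Module.End ℂ V →ₗ[ℂ] ℂ)
    (hstr : ∀ P Q : Module.End ℂ V, str (P ∘ₗ Q) = str (Q ∘ₗ P))
    (B : Module.End ℂ V) (b c : V) :
    str (LinearMap.mulLeft ℂ c ∘ₗ (B ∘ₗ LinearMap.mulLeft ℂ b
      - LinearMap.mulLeft ℂ b ∘ₗ B)) = 0 := by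
  have h1 : LinearMap.mulLeft ℂ c ∘ₗ (B ∘ₗ LinearMap.mulLeft ℂ b
      - LinearMap.mulLeft ℂ b ∘ₗ B)
      = (LinearMap.mulLeft ℂ c ∘ₗ B) ∘ₗ LinearMap.mulLeft ℂ b
        - (LinearMap.mulLeft ℂ c ∘ₗ LinearMap.mulLeft ℂ b) ∘ₗ B := by
    ext x; simp [mul_assoc, mul_sub]
  rw [h1, map_sub, hstr (LinearMap.mulLeft ℂ c ∘ₗ B) (LinearMap.mulLeft ℂ b)]
  have h2 : LinearMap.mulLeft ℂ b ∘ₗ (LinearMap.mulLeft ℂ c ∘ₗ B)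
      = (LinearMap.mulLeft ℂ c ∘ₗ LinearMap.mulLeft ℂ b) ∘ₗ B := by
    ext x; simp [mul_left_comm]
  rw [h2, sub_self]

theorem trace_koszul_mul_extra_low_order {V : Type*} [CommRing V] [Algebra ℂ V]
    (str : Module.End ℂ V →ₗ[ℂ] ℂ)
    (hstr : ∀ P Q : Module.End ℂ V, str (P ∘ₗ Q) = str (Q ∘ₗ P))
    (l : ℕ) (hl : l = 1 ∨ l = 2)
    (A : V →ₗ[ℂ] V) (hA : IsDiffOpOfOrderAtMost (⇑A) l)
    (f : Fin (l + 1) → V) :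
    str (LinearMap.mulLeft ℂ
      (koszul (⇑A) l (fun i : Fin l => f i.castSucc) * f (Fin.last l))) = 0 := by
  rcases hl with rfl | rfl
  · -- l = 1 : A is a derivation
    have hder : ∀ x y : V, A (x * y) = A x * y + x * A y := by
      intro x y
      have := hA ![x, y]
      rw [koszul_two] at this
      simp at this
      linear_combination this
    have key : LinearMap.mulLeft ℂ (A (f 0))
        = A ∘ₗ LinearMap.mulLeft ℂ (f 0) - LinearMap.mulLeft ℂ (f 0) ∘ₗ A := by
      ext x; simp [hder]
    have h0 : (koszul (⇑A) 1 (fun i : Fin 1 => f i.castSucc)) = A (f 0) := by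
      simp [koszul]
    have hsplit : LinearMap.mulLeft ℂ
        (koszul (⇑A) 1 (fun i : Fin 1 => f i.castSucc) * f (Fin.last 1))
        = LinearMap.mulLeft ℂ (f (Fin.last 1)) ∘ₗ LinearMap.mulLeft ℂ (A (f 0)) := by
      rw [h0]; ext x
      simp only [LinearMap.mulLeft_apply, LinearMap.coe_comp, Function.comp_apply]
      ring
    rw [hsplit, key]
    exact trace_commutator_aux str hstr A (f 0) (f (Fin.last 1))
  · -- l = 2
    set B : Module.End ℂ V := A ∘ₗ LinearMap.mulLeft ℂ (f 0)
        - LinearMap.mulLeft ℂ (A (f 0)) - LinearMap.mulLeft ℂ (f 0) ∘ₗ A with hB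
    have hBval : ∀ x : V, B x = A (f 0 * x) - A (f 0) * x - f 0 * A x := by
      intro x; simp [hB]
    have hBk : ∀ x : V, koszul (⇑A) 2 ![f 0, x] = B x := by
      intro x; rw [koszul_two, hBval]; simp
    have hder : ∀ x : V, B (f 1 * x) = B (f 1) * x + f 1 * B x := by
      intro x
      have := hA ![f 0, f 1, x]
      rw [koszul_three] at this
      simp only [Matrix.cons_val_zero, Matrix.cons_val_one, Matrix.head_cons,
        Matrix.cons_val_two, Matrix.tail_cons] at this
      rw [hBk, hBk, hBk] at this
      linear_combination this
    have h0 : koszul (⇑A) 2 (fun i : Fin 2 => f i.castSucc) = B (f 1) := by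
      rw [← hBk]
      congr 1
      funext i
      fin_cases i <;> rfl
    have key : LinearMap.mulLeft ℂ (B (f 1))
        = B ∘ₗ LinearMap.mulLeft ℂ (f 1) - LinearMap.mulLeft ℂ (f 1) ∘ₗ B := by
      ext x; simp only [LinearMap.mulLeft_apply, LinearMap.sub_apply,
        LinearMap.coe_comp, Function.comp_apply]
      rw [hder]; ring
    have hsplit : LinearMap.mulLeft ℂ
        (koszul (⇑A) 2 (fun i : Fin 2 => f i.castSucc) * f (Fin.last 2))
        = LinearMap.mulLeft ℂ (f (Fin.last 2)) ∘ₗ LinearMap.mulLeft ℂ (B (f 1)) := by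
      rw [h0]; ext x
      simp only [LinearMap.mulLeft_apply, LinearMap.coe_comp, Function.comp_apply]
      ring
    rw [hsplit, key]
    exact trace_commutator_aux str hstr B (f 1) (f (Fin.last 2))
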